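/- Let σ : A → A^+ be an aperiodic proper substitution with |σ^n| → ∞ as n → ∞. Then the sequence of Kakutani–Rokhlin partitions P_n = {T_σ^i σ^n([a]) : a ∈ A, 0 ≤ i < |σ^n(a)|} generates the topology of X_σ: for every m > 0 there exists n such that the block x[−m,m] is constant on each element of P_n. -/

import Mathlib

/-!
Let `p` be the properness exponent, `n₀` such that `|σ^{n₀}(c)| ≥ m` for every letter `c`, and
`τ = σ^{n₀+p}`. A point of `T^i τ([a])` is `T^i z`, where `z` is the `τ`-image of some
`y ∈ X_σ` with `y 0 = a`, and `0 ≤ i < |τ(a)|`. Properness makes the last letter `r` of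
`σ^p(y (-1))` and the first letter `l` of `σ^p(y 1)` depend only on `a`, so `τ(y (-1))` ends with
`σ^{n₀}(r)` and `τ(y 1)` begins with `σ^{n₀}(l)`. Hence `z` reads `σ^{n₀}(r) τ(a) σ^{n₀}(l)`
around the origin, a word determined by `a` that contains the window `[i - m, i + m]`.
-/

open Filter Topology

namespace PaperStmt

variable {A : Type*} {B : Type*}

/-- Apply a substitution (letter-to-word map) to a word, by concatenation. -/
def substWord (σ : B → List A) (w : List B) : List A := w.flatMap σ

/-- `σ^n` applied to a word. -/
def substIter (σ : A → List A) (n : ℕ) (w : List A) : List A := (substWord σ)^[n] w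

/-- `σ^n(a)` for a letter `a`. -/
def substPow (σ : A → List A) (n : ℕ) (a : A) : List A := substIter σ n [a]

/-- The language of a substitution: factors of some `σ^n(a)`, `n ≥ 1`. -/
def Lang (σ : A → List A) : Set (List A) :=
  {w | ∃ a : A, ∃ n : ℕ, 1 ≤ n ∧ w <:+: substIter σ n [a]}

/-- The word `x[i], x[i+1], …, x[i+len-1]` read in a bi-infinite sequence. -/
def seg (x : ℤ → A) (i : ℤ) (len : ℕ) : List A :=
  (List.range len).map fun k => x (i + k)

/-- The phase space `X_σ` of the substitutional dynamical system. -/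
def Xsub (σ : A → List A) : Set (ℤ → A) :=
  {x | ∀ n : ℕ, seg x (-(n : ℤ)) (2 * n + 1) ∈ Lang σ}

/-- `L(X_σ)`: all finite words occurring in elements of `X_σ`. -/
def LangX (σ : A → List A) : Set (List A) :=
  {w | ∃ x ∈ Xsub σ, ∃ i : ℤ, seg x i w.length = w}

/-- The left shift `T`. -/
def shift (x : ℤ → A) : ℤ → A := fun k => x (k + 1)

/-- The power `T^i` of the left shift, `i ∈ ℤ`. -/
def shiftZ (i : ℤ) (x : ℤ → A) : ℤ → A := fun k => x (k + i)

/-- `(X_σ, T_σ)` has no periodic points. -/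
def Aperiodic (σ : A → List A) : Prop :=
  ∀ x ∈ Xsub σ, ∀ p : ℕ, 0 < p → shiftZ (p : ℤ) x ≠ x

/-- The coordinate at which the `n`-th block of the bi-infinite concatenation
`⋯ σ(x_{-1}).σ(x_0) σ(x_1) ⋯` starts (block `0` starts at coordinate `0`). -/
def blockStart (σ : B → List A) (x : ℤ → B) (n : ℤ) : ℤ :=
  if 0 ≤ n then ∑ j ∈ Finset.range n.toNat, ((σ (x (j : ℤ))).length : ℤ)
  else -∑ j ∈ Finset.range (-n).toNat, ((σ (x (-(j : ℤ) - 1))).length : ℤ)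

/-- `y` is the image of the bi-infinite sequence `x` under the substitution `σ`,
i.e. `y = ⋯ σ(x_{-1}).σ(x_0)σ(x_1)⋯` with `σ(x_0)` starting at coordinate `0`. -/
def IsSubstImage (σ : B → List A) (x : ℤ → B) (y : ℤ → A) : Prop :=
  ∀ n : ℤ, seg y (blockStart σ x n) (σ (x n)).length = σ (x n)

/-- `A_l`: the letters `a` with `|σ^n(a)| → ∞`. -/
def longLetters (σ : A → List A) : Set A :=
  {a | Tendsto (fun n => (substPow σ n a).length) atTop atTop}

/-- A minimal component of `(X_σ, T_σ)`: a nonempty closed shift-invariant subset of `X_σ`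
that is minimal with respect to inclusion. -/
def MinimalComponent [TopologicalSpace A] (σ : A → List A) (Z : Set (ℤ → A)) : Prop :=
  Z.Nonempty ∧ IsClosed Z ∧ Z ⊆ Xsub σ ∧ shift '' Z = Z ∧
    ∀ Z' : Set (ℤ → A), Z'.Nonempty → IsClosed Z' → Z' ⊆ Z → shift '' Z' = Z' → Z' = Z

/-- The element `T_σ^i σ^n([a])` of the Kakutani–Rokhlin partition `P_n`. -/
def piece (σ : A → List A) (n : ℕ) (a : A) (i : ℕ) : Set (ℤ → A) :=
  {x | ∃ y z : ℤ → A, y ∈ Xsub σ ∧ y 0 = a ∧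
    IsSubstImage (substPow σ n) y z ∧ x = shiftZ (i : ℤ) z}

/-- An `m`-primitive substitution, with respect to a decomposition
`A = P 0 ⊔ … ⊔ P (m-1) ⊔ A0`. -/
def IsMPrimitive (σ : A → List A) (m : ℕ) (P : Fin m → Set A) (A0 : Set A) : Prop :=
  (∀ i j : Fin m, i ≠ j → Disjoint (P i) (P j)) ∧
  (∀ i, Disjoint (P i) A0) ∧
  ((⋃ i, P i) ∪ A0 = Set.univ) ∧
  (∀ i, ∃ a ∈ P i, ∃ b ∈ P i, a ≠ b) ∧
  (∀ i, ∀ a ∈ P i, ∀ b ∈ σ a, b ∈ P i) ∧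
  (∀ i, ∀ a ∈ P i, ∀ b ∈ P i, ∃ n : ℕ, 1 ≤ n ∧ b ∈ substPow σ n a) ∧
  (∀ a : A, ∃ n : ℕ, 0 < n ∧ ∃ i, ∃ b ∈ P i, b ∈ substPow σ n a) ∧
  (∀ k : ℕ, 1 ≤ k → Lang (substPow σ k) = Lang σ) ∧
  (∀ a : A, [a] ∈ LangX σ)

/-- The set `Z_i` attached to the part `A_i = P i` of an `m`-primitive substitution. -/
def Zset (σ : A → List A) {m : ℕ} (P : Fin m → Set A) (i : Fin m) : Set (ℤ → A) :=
  {x | x ∈ Xsub σ ∧ ∀ n : ℕ, ∃ k : ℕ, 1 ≤ k ∧ ∃ a ∈ P i,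
    seg x (-(n : ℤ)) (2 * n + 1) <:+: substPow σ k a}

/-- The clopen set `W = ∪_i [r_i.l_i]` built from fixed points `w i`. -/
def Wset (σ : A → List A) {m : ℕ} (w : Fin m → ℤ → A) : Set (ℤ → A) :=
  ⋃ i : Fin m, {x | x ∈ Xsub σ ∧ x (-1) = w i (-1) ∧ x 0 = w i 0}

/-- A return word, given the letters `r i = w_i[-1]` and `l i = w_i[0]`. -/
def IsReturnWord (σ : A → List A) {m : ℕ} (r l : Fin m → A) (u : List A) : Prop :=
  u ∈ LangX σ ∧ u ≠ [] ∧ ∃ i j : Fin m,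
    (r i :: (u ++ [l j])) ∈ LangX σ ∧
    u.head? = some (l i) ∧ u.getLast? = some (r j) ∧
    ∀ t : Fin m, ¬ ([r t, l t] <:+: u)

/-- A proper substitution. -/
def IsProper (σ : A → List A) : Prop :=
  ∃ p : ℕ, 0 < p ∧ ∀ a : A,
    (∀ b c : A, [a, b] ∈ LangX σ → [a, c] ∈ LangX σ →
      (substPow σ p b).head? = (substPow σ p c).head?) ∧
    (∀ b c : A, [b, a] ∈ LangX σ → [c, a] ∈ LangX σ →
      (substPow σ p b).getLast? = (substPow σ p c).getLast?)

/-- Membership in the set `V` of words `v₁S₁v₂S₂v₃` with `v₁,v₂,v₃ ∈ A_l`, `S₁,S₂ ∈ A_s^*`. -/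
def Vcond (σ : A → List A) : A × List A × A × List A × A → Prop
  | (v1, S1, v2, S2, v3) =>
    v1 ∈ longLetters σ ∧ v2 ∈ longLetters σ ∧ v3 ∈ longLetters σ ∧
    (∀ c ∈ S1, c ∉ longLetters σ) ∧ (∀ c ∈ S2, c ∉ longLetters σ) ∧
    (v1 :: (S1 ++ v2 :: (S2 ++ [v3]))) ∈ LangX σ

/-- The cylinder set `[v₁S₁.v₂S₂v₃]`. -/
def Vbase (σ : A → List A) : A × List A × A × List A × A → Set (ℤ → A)
  | (v1, S1, v2, S2, v3) =>
    {x | x ∈ Xsub σ ∧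
      seg x (-(1 + S1.length : ℤ)) (v1 :: (S1 ++ v2 :: (S2 ++ [v3]))).length
        = v1 :: (S1 ++ v2 :: (S2 ++ [v3]))}

/-- The height `|σ^n(v₂S₂)|` of the tower over `[v₁S₁.v₂S₂v₃]` in `Ξ_n`. -/
def Vheight (σ : A → List A) (n : ℕ) : A × List A × A × List A × A → ℕ
  | (_, _, v2, S2, _) => (substWord (substPow σ n) (v2 :: S2)).length

/-- The element `T_σ^i σ^n([v₁S₁.v₂S₂v₃])` of the Kakutani–Rokhlin partition `Ξ_n`. -/
def Vpiece (σ : A → List A) (n : ℕ) (q : A × List A × A × List A × A) (i : ℕ) :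
    Set (ℤ → A) :=
  {x | ∃ y z : ℤ → A, y ∈ Vbase σ q ∧ IsSubstImage (substPow σ n) y z ∧
    x = shiftZ (i : ℤ) z}

/-- Membership in `Λ`. -/
def MemLambda (σ : A → List A) (s : ℕ → A × A) : Prop :=
  ∀ n : ℕ, [(s n).1, (s n).2] ∈ Lang σ ∧
    (σ (s (n + 1)).1).getLast? = some (s n).1 ∧
    (σ (s (n + 1)).2).head? = some (s n).2

/-- `x = w(s̄)` for `s̄ ∈ Λ`. -/
def IsLambdaPoint (σ : A → List A) (s : ℕ → A × A) (x : ℤ → A) : Prop :=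
  ∀ n : ℕ, seg x (-((substPow σ n (s n).1).length : ℤ))
      ((substPow σ n (s n).1).length + (substPow σ n (s n).2).length)
    = substPow σ n (s n).1 ++ substPow σ n (s n).2

/-- Membership in `M`: `i₀ = 0` and `a_j` occurs at position `i_{j+1}` of `σ(a_{j+1})`. -/
def MemM (σ : A → List A) (t : ℕ → A × ℕ) : Prop :=
  (t 0).2 = 0 ∧ ∀ j : ℕ, (σ (t (j + 1)).1)[(t (j + 1)).2]? = some (t j).1

/-- The cutting points `j_n` attached to an element of `M`. -/
def jSeq (σ : A → List A) (t : ℕ → A × ℕ) : ℕ → ℕ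
  | 0 => 0
  | n + 1 =>
      jSeq σ t n + (substWord (substPow σ n) ((σ (t (n + 1)).1).take (t (n + 1)).2)).length

/-- Membership in `M₀`: `j_n → ∞` and `|σ^n(a_n)| - j_n → ∞`. -/
def MZero (σ : A → List A) (t : ℕ → A × ℕ) : Prop :=
  MemM σ t ∧ ∀ N : ℕ, ∃ n0 : ℕ, ∀ n ≥ n0,
    N ≤ jSeq σ t n ∧ jSeq σ t n + N ≤ (substPow σ n (t n).1).length

/-- `x = w(m̄)` for `m̄ ∈ M₀`. -/
def IsMPoint (σ : A → List A) (t : ℕ → A × ℕ) (x : ℤ → A) : Prop :=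
  ∀ n : ℕ, seg x (-(jSeq σ t n : ℤ)) (substPow σ n (t n).1).length = substPow σ n (t n).1

section Words

lemma substIter_add (σ : A → List A) (m n : ℕ) (w : List A) :
    substIter σ (m + n) w = substIter σ m (substIter σ n w) :=
  Function.iterate_add_apply _ _ _ _

lemma substIter_append (σ : A → List A) (n : ℕ) (u v : List A) :
    substIter σ n (u ++ v) = substIter σ n u ++ substIter σ n v := by
  induction n generalizing u v with
  | zero => rfl
  | succ n ih =>
    simp only [substIter, Function.iterate_succ_apply, substWord, List.flatMap_append] at ih ⊢
    exact ih _ _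

lemma substIter_nil (σ : A → List A) (n : ℕ) : substIter σ n [] = [] := by
  simpa using substIter_append σ n [] []

lemma substPow_add (σ : A → List A) (m n : ℕ) (a : A) :
    substPow σ (m + n) a = substIter σ m (substPow σ n a) :=
  substIter_add σ m n [a]

lemma substPow_ne_nil_of_growth {σ : A → List A}
    (h : ∃ n0 : ℕ, ∀ n ≥ n0, ∀ a : A, 1 ≤ (substPow σ n a).length) (p : ℕ) (b : A) :
    substPow σ p b ≠ [] := by
  obtain ⟨n0, hn0⟩ := h
  intro hb
  have := hn0 (n0 + p) (by omega) b
  rw [substPow_add, hb, substIter_nil] at this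
  simp at this

lemma substPow_suffix_of_getLast? {σ : A → List A} {p : ℕ} {b r : A}
    (h : (substPow σ p b).getLast? = some r) (n : ℕ) :
    substPow σ n r <:+ substPow σ (n + p) b := by
  obtain ⟨u, hu⟩ := List.getLast?_eq_some_iff.1 h
  exact ⟨substIter σ n u, by rw [substPow_add, hu, substIter_append, substPow]⟩

lemma substPow_prefix_of_head? {σ : A → List A} {p : ℕ} {c l : A}
    (h : (substPow σ p c).head? = some l) (n : ℕ) :
    substPow σ n l <+: substPow σ (n + p) c := by
  obtain ⟨u, hu⟩ := List.head?_eq_some_iff.1 h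
  exact ⟨substIter σ n u, by rw [substPow_add, hu, ← List.singleton_append,
    substIter_append, substPow]⟩

lemma exists_common_suffix {σ : A → List A} {p : ℕ} {b c : A} (hb : substPow σ p b ≠ [])
    (h : (substPow σ p b).getLast? = (substPow σ p c).getLast?) (n : ℕ) :
    ∃ r, substPow σ n r <:+ substPow σ (n + p) b ∧ substPow σ n r <:+ substPow σ (n + p) c := by
  have hr := List.getLast?_eq_some_getLast hb
  exact ⟨_, substPow_suffix_of_getLast? hr n, substPow_suffix_of_getLast? (h ▸ hr) n⟩

lemma exists_common_prefix {σ : A → List A} {p : ℕ} {b c : A} (hb : substPow σ p b ≠ [])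
    (h : (substPow σ p b).head? = (substPow σ p c).head?) (n : ℕ) :
    ∃ l, substPow σ n l <+: substPow σ (n + p) b ∧ substPow σ n l <+: substPow σ (n + p) c := by
  have hl := List.head?_eq_some_head hb
  exact ⟨_, substPow_prefix_of_head? hl n, substPow_prefix_of_head? (h ▸ hl) n⟩

end Words

section Segments

/-- `seg` as elaborated coerces `List.range len` to `List ℤ` monadically; this is its plain form. -/
lemma seg_eq_map (x : ℤ → A) (i : ℤ) (l : ℕ) :
    seg x i l = (List.range l).map fun k : ℕ => x (i + k) := by
  simp [seg, List.map_eq_flatMap, List.flatMap_assoc]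

lemma seg_length (x : ℤ → A) (i : ℤ) (l : ℕ) : (seg x i l).length = l := by
  simp [seg_eq_map]

lemma seg_append (x : ℤ → A) (i : ℤ) (k l : ℕ) :
    seg x i (k + l) = seg x i k ++ seg x (i + k) l := by
  simp only [seg_eq_map, List.range_add, List.map_append, List.map_map]
  congr 2
  funext t
  simp only [Function.comp_apply, Nat.cast_add, add_assoc]

lemma seg_shiftZ (s : ℤ) (x : ℤ → A) (i : ℤ) (l : ℕ) :
    seg (shiftZ s x) i l = seg x (i + s) l := by
  simp only [seg_eq_map, shiftZ, add_right_comm]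

lemma seg_eq_seg_iff {x x' : ℤ → A} {i : ℤ} {l : ℕ} :
    seg x i l = seg x' i l ↔ ∀ k < l, x (i + k) = x' (i + k) := by
  simp [seg_eq_map, List.map_inj_left]

lemma seg_eq_seg_of_subwindow {x x' : ℤ → A} {i j : ℤ} {k l : ℕ} (h : seg x i l = seg x' i l)
    (hij : i ≤ j) (hjk : j + k ≤ i + l) : seg x j k = seg x' j k := by
  rw [seg_eq_seg_iff] at h ⊢
  intro t ht
  have := h (j - i + t).toNat (by omega)
  rwa [show i + ((j - i + t).toNat : ℤ) = j + t by omega] at this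

lemma seg_of_isPrefix {x : ℤ → A} {i : ℤ} {w v : List A} (h : seg x i w.length = w)
    (hv : v <+: w) : seg x i v.length = v := by
  obtain ⟨u, rfl⟩ := hv
  rw [List.length_append, seg_append] at h
  exact List.append_inj_left' h (by simp [seg_length])

lemma seg_of_isSuffix {x : ℤ → A} {i : ℤ} {w v : List A} (h : seg x i w.length = w)
    (hv : v <:+ w) : seg x (i + w.length - v.length) v.length = v := by
  obtain ⟨u, rfl⟩ := hv
  rw [List.length_append, seg_append] at h
  rw [List.length_append, Nat.cast_add, add_sub_assoc, add_sub_cancel_right]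
  exact List.append_inj_right' h (by simp [seg_length])

lemma pair_mem_langX {σ : A → List A} {y : ℤ → A} (hy : y ∈ Xsub σ) (i : ℤ) :
    [y i, y (i + 1)] ∈ LangX σ :=
  ⟨y, hy, i, by simp [seg_eq_map, List.range_succ]⟩

end Segments

section SubstImage

lemma blockStart_zero (τ : B → List A) (y : ℤ → B) : blockStart τ y 0 = 0 := by
  simp [blockStart]

lemma blockStart_one (τ : B → List A) (y : ℤ → B) :
    blockStart τ y 1 = ((τ (y 0)).length : ℤ) := by
  norm_num [blockStart]

lemma blockStart_neg_one (τ : B → List A) (y : ℤ → B) :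
    blockStart τ y (-1) = -((τ (y (-1))).length : ℤ) := by
  norm_num [blockStart]

lemma IsSubstImage.seg_around_zero {τ : B → List A} {y : ℤ → B} {z : ℤ → A}
    (h : IsSubstImage τ y z) {u v : List A} (hu : u <:+ τ (y (-1))) (hv : v <+: τ (y 1)) :
    seg z (-u.length) (u.length + (τ (y 0)).length + v.length) = u ++ τ (y 0) ++ v := by
  have hleft := seg_of_isSuffix (h (-1)) hu
  have hmid := h 0
  have hright := seg_of_isPrefix (h 1) hv
  rw [blockStart_neg_one, neg_add_cancel, zero_sub] at hleft
  rw [blockStart_zero] at hmid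
  rw [blockStart_one] at hright
  rw [seg_append, seg_append, hleft, neg_add_cancel, hmid, Nat.cast_add, neg_add_cancel_left,
    hright]

end SubstImage

theorem proper_substitution_partitions_generate_topology_general
    {A : Type*} (σ : A → List A)
    (hproper : IsProper σ)
    (hmin : ∀ M : ℕ, ∃ n0 : ℕ, ∀ n ≥ n0, ∀ a : A, M ≤ (substPow σ n a).length) :
    ∀ m : ℕ, 0 < m → ∃ n : ℕ, ∀ a : A, ∀ i : ℕ, i < (substPow σ n a).length →
      ∀ x ∈ piece σ n a i, ∀ x' ∈ piece σ n a i,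
        seg x (-(m : ℤ)) (2 * m + 1) = seg x' (-(m : ℤ)) (2 * m + 1) := by
  obtain ⟨p, -, hprop⟩ := hproper
  have hne := substPow_ne_nil_of_growth (hmin 1) p
  intro m _
  obtain ⟨n0, hn0⟩ := hmin m
  refine ⟨n0 + p, fun a i hi _ ⟨y, z, hy, hy0, hz, hx⟩ _ ⟨y', z', hy', hy0', hz', hx'⟩ => ?_⟩
  subst hx hx' hy0
  obtain ⟨r, hr, hr'⟩ := exists_common_suffix (hne _)
    ((hprop _).2 _ _ (by simpa using pair_mem_langX hy (-1))
      (by simpa [hy0'] using pair_mem_langX hy' (-1))) n0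
  obtain ⟨l, hl, hl'⟩ := exists_common_prefix (hne _)
    ((hprop _).1 _ _ (pair_mem_langX hy 0) (by simpa [hy0'] using pair_mem_langX hy' 0)) n0
  have hwindow := (hz.seg_around_zero hr hl).trans
    (hy0' ▸ hz'.seg_around_zero hr' hl').symm
  rw [seg_shiftZ, seg_shiftZ]
  have hr_len := hn0 n0 le_rfl r
  have hl_len := hn0 n0 le_rfl l
  exact seg_eq_seg_of_subwindow hwindow (by omega) (by push_cast; omega)

/-- For an aperiodic proper substitution with `|σ^n| → ∞`, the
Kakutani–Rokhlin partitions `P_n = {T_σ^i σ^n([a])}` generate the topology of `X_σ`: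
for every `m > 0` there is `n` such that `x[-m,m]` is constant on each element of `P_n`. -/
theorem proper_substitution_partitions_generate_topology
    {A : Type*} [Fintype A] (σ : A → List A) (hne : ∀ a, σ a ≠ [])
    (hunc : ¬ (Xsub σ).Countable) (hap : Aperiodic σ) (hproper : IsProper σ)
    (hmin : ∀ M : ℕ, ∃ n0 : ℕ, ∀ n ≥ n0, ∀ a : A, M ≤ (substPow σ n a).length) :
    ∀ m : ℕ, 0 < m → ∃ n : ℕ, ∀ a : A, ∀ i : ℕ, i < (substPow σ n a).length →
      ∀ x ∈ piece σ n a i, ∀ x' ∈ piece σ n a i,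
        seg x (-(m : ℤ)) (2 * m + 1) = seg x' (-(m : ℤ)) (2 * m + 1) :=
  proper_substitution_partitions_generate_topology_general σ hproper hmin

end PaperStmt
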